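/- Boundary-sparsity is inherited upward under nested splits: let C' ⊂ C be obtained by cutting C along a (1−δ)-boundary-sparse cut C' (so w(C', C∖C') ≤ (1−δ)·w(C∖C', V∖C)). Let S ⊆ C' be (1−δ)-boundary sparse in C' with no edges from S to C∖C'. Then S is (1−δ)-boundary sparse in C, i.e., w(S, C∖S) ≤ (1−δ)·min{w(S, V∖C), w(C∖S, V∖C)}. -/
import Mathlib


open Finset

/-- The number of edges of the multigraph `(ends, ground)` with one endpoint in `A`
and the other in `B` (for disjoint `A`, `B`). -/
def xw {V E : Type*} [Fintype V] [DecidableEq V] [DecidableEq E]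
    (ends : E → Sym2 V) (ground : Finset E) (A B : Finset V) : ℕ :=
  (ground.filter fun e => ∃ a b, ends e = s(a, b) ∧ a ∈ A ∧ b ∈ B).card

/-- The boundary size `∂S` of a vertex set `S`. -/
def bnd {V E : Type*} [Fintype V] [DecidableEq V] [DecidableEq E]
    (ends : E → Sym2 V) (ground : Finset E) (S : Finset V) : ℕ :=
  xw ends ground S (univ \ S)

/-- The volume of a vertex set `S`: the sum over `v ∈ S` of the number of incident edges. -/
def volG {V E : Type*} [Fintype V] [DecidableEq V] [DecidableEq E]
    (ends : E → Sym2 V) (ground : Finset E) (S : Finset V) : ℕ :=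
  ∑ v ∈ S, (ground.filter fun e => ∃ a b, ends e = s(a, b) ∧ (a = v ∨ b = v)).card


lemma xw_comm {V E : Type*} [Fintype V] [DecidableEq V] [DecidableEq E]
    (ends : E → Sym2 V) (ground : Finset E) (A B : Finset V) :
    xw ends ground A B = xw ends ground B A := by
  unfold xw
  congr 1
  apply filter_congr
  intro e _
  constructor <;> rintro ⟨a, b, h, ha, hb⟩ <;>
    exact ⟨b, a, by rw [h, Sym2.eq_swap], hb, ha⟩

lemma xw_union_right {V E : Type*} [Fintype V] [DecidableEq V] [DecidableEq E]
    (ends : E → Sym2 V) (ground : Finset E) {A B₁ B₂ : Finset V}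
    (h12 : Disjoint B₁ B₂) (h1 : Disjoint A B₁) (h2 : Disjoint A B₂) :
    xw ends ground A (B₁ ∪ B₂) = xw ends ground A B₁ + xw ends ground A B₂ := by
  unfold xw
  rw [← card_union_of_disjoint, ← filter_or]
  · congr 1
    apply filter_congr
    intro e _
    constructor
    · rintro ⟨a, b, h, ha, hb⟩
      rcases mem_union.1 hb with hb | hb
      · exact Or.inl ⟨a, b, h, ha, hb⟩
      · exact Or.inr ⟨a, b, h, ha, hb⟩
    · rintro (⟨a, b, h, ha, hb⟩ | ⟨a, b, h, ha, hb⟩) <;>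
        exact ⟨a, b, h, ha, by simp [hb]⟩
  · rw [disjoint_left]
    rintro e he he'
    obtain ⟨a, b, h, ha, hb⟩ := (mem_filter.1 he).2
    obtain ⟨a', b', h', ha', hb'⟩ := (mem_filter.1 he').2
    rw [h, Sym2.eq_iff] at h'
    rcases h' with ⟨rfl, rfl⟩ | ⟨rfl, rfl⟩
    · exact disjoint_left.1 h12 hb hb'
    · exact disjoint_left.1 h2 ha hb'

/-- Boundary-sparsity is inherited upward under nested splits: let
`C' ⊆ C` be obtained by cutting `C` along a `(1−δ)`-boundary-sparse cut `C'` (so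
`w(C', C∖C') ≤ (1−δ)·w(C∖C', V∖C)`), and let `S ⊆ C'` be `(1−δ)`-boundary sparse in `C'`
with no edges from `S` to `C∖C'`. Then `S` is `(1−δ)`-boundary sparse in `C`:
`w(S, C∖S) ≤ (1−δ)·min{w(S, V∖C), w(C∖S, V∖C)}`. -/
theorem boundary_sparse_inherited_upward
    {V E : Type*} [Fintype V] [DecidableEq V] [DecidableEq E]
    (ends : E → Sym2 V) (ground : Finset E) (C C' S : Finset V) (δ : ℝ)
    (hδ0 : 0 ≤ δ) (hδ1 : δ ≤ 1)
    (hC' : C' ⊆ C) (hS : S ⊆ C')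
    (hsparseC' : (xw ends ground C' (C \ C') : ℝ) ≤
      (1 - δ) * (xw ends ground (C \ C') (univ \ C) : ℝ))
    (hsparseS : (xw ends ground S (C' \ S) : ℝ) ≤
      (1 - δ) * min ((xw ends ground S (univ \ C') : ℝ))
        ((xw ends ground (C' \ S) (univ \ C') : ℝ)))
    (hnoedge : xw ends ground S (C \ C') = 0) :
    (xw ends ground S (C \ S) : ℝ) ≤
      (1 - δ) * min ((xw ends ground S (univ \ C) : ℝ))
        ((xw ends ground (C \ S) (univ \ C) : ℝ)) := by
  classical
  set w := xw ends ground with hw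
  have dSC' : Disjoint S (C' \ S) := disjoint_sdiff
  have dSCC' : Disjoint S (C \ C') := by
    rw [disjoint_left]; intro x hx hx'; exact (mem_sdiff.1 hx').2 (hS hx)
  have dC'SCC' : Disjoint (C' \ S) (C \ C') := by
    rw [disjoint_left]; intro x hx hx'; exact (mem_sdiff.1 hx').2 (mem_sdiff.1 hx).1
  have dUC : Disjoint (univ \ C) (C \ C') := by
    rw [disjoint_left]; intro x hx hx'; exact (mem_sdiff.1 hx).2 (mem_sdiff.1 hx').1
  have dSU : Disjoint S (univ \ C) := by
    rw [disjoint_left]; intro x hx hx'; exact (mem_sdiff.1 hx').2 (hC' (hS hx))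
  have dC'SU : Disjoint (C' \ S) (univ \ C) := by
    rw [disjoint_left]; intro x hx hx'; exact (mem_sdiff.1 hx').2 (hC' (mem_sdiff.1 hx).1)
  -- set decompositions
  have eCS : C \ S = (C' \ S) ∪ (C \ C') := by
    ext x; simp only [mem_sdiff, mem_union]
    constructor
    · rintro ⟨hxC, hxS⟩
      by_cases h : x ∈ C'
      · exact Or.inl ⟨h, hxS⟩
      · exact Or.inr ⟨hxC, h⟩
    · rintro (⟨h1, h2⟩ | ⟨h1, h2⟩)
      · exact ⟨hC' h1, h2⟩
      · exact ⟨h1, fun hx => h2 (hS hx)⟩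
  have eUC' : (univ : Finset V) \ C' = (univ \ C) ∪ (C \ C') := by
    ext x; simp only [mem_sdiff, mem_union, mem_univ, true_and]
    constructor
    · intro h
      by_cases hx : x ∈ C
      · exact Or.inr ⟨hx, h⟩
      · exact Or.inl hx
    · rintro (h | ⟨h1, h2⟩)
      · exact fun hx => h (hC' hx)
      · exact h2
  have eC' : C' = S ∪ (C' \ S) := by
    rw [union_sdiff_of_subset hS]
  -- edge count decompositions (as naturals)
  have a1 : w S (C \ S) = w S (C' \ S) := by
    rw [hw, eCS, xw_union_right ends ground dC'SCC' dSC' dSCC', ← hw, hnoedge]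
    omega
  have a2 : w S (univ \ C') = w S (univ \ C) := by
    rw [hw, eUC', xw_union_right ends ground dUC dSU dSCC', ← hw, hnoedge]
    omega
  have a3 : w (C' \ S) (univ \ C') =
      w (C' \ S) (univ \ C) + w (C' \ S) (C \ C') := by
    rw [hw, eUC', xw_union_right ends ground dUC dC'SU dC'SCC']
  have a4 : w (C \ S) (univ \ C) =
      w (C' \ S) (univ \ C) + w (C \ C') (univ \ C) := by
    rw [hw, xw_comm, eCS, xw_union_right ends ground dC'SCC' dC'SU.symm dUC,
      xw_comm ends ground (univ \ C) (C' \ S), xw_comm ends ground (univ \ C) (C \ C')]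
  have a5 : w C' (C \ C') = w (C' \ S) (C \ C') := by
    have h := xw_union_right ends ground (A := C \ C')
      dSC' dSCC'.symm dC'SCC'.symm
    rw [← eC'] at h
    rw [hw, xw_comm ends ground C' (C \ C'), h,
      xw_comm ends ground (C \ C') S, xw_comm ends ground (C \ C') (C' \ S),
      ← hw, hnoedge]
    omega
  -- real-number estimates
  have h1δ : (0 : ℝ) ≤ 1 - δ := by linarith
  have hb : (w (C' \ S) (univ \ C') : ℝ) ≤ (w (C \ S) (univ \ C) : ℝ) := by
    have h5 : (w C' (C \ C') : ℝ) ≤ (w (C \ C') (univ \ C) : ℝ) := by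
      calc (w C' (C \ C') : ℝ) ≤ (1 - δ) * (w (C \ C') (univ \ C) : ℝ) := hsparseC'
        _ ≤ 1 * (w (C \ C') (univ \ C) : ℝ) := by
            apply mul_le_mul_of_nonneg_right _ (Nat.cast_nonneg _); linarith
        _ = _ := one_mul _
    rw [a3, a4]
    push_cast
    rw [← a5]
    linarith
  have hmin : min ((w S (univ \ C') : ℝ)) ((w (C' \ S) (univ \ C') : ℝ)) ≤
      min ((w S (univ \ C) : ℝ)) ((w (C \ S) (univ \ C) : ℝ)) := by
    apply min_le_min _ hb
    rw [a2]
  calc (w S (C \ S) : ℝ) = (w S (C' \ S) : ℝ) := by rw [a1]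
    _ ≤ (1 - δ) * min ((w S (univ \ C') : ℝ)) ((w (C' \ S) (univ \ C') : ℝ)) := hsparseS
    _ ≤ (1 - δ) * min ((w S (univ \ C) : ℝ)) ((w (C \ S) (univ \ C) : ℝ)) :=
        mul_le_mul_of_nonneg_left hmin h1δ
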